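/- arXiv:2512.12409 — 3 statements merged into one kernel-verified Lean document; each statement's English description precedes it below -/
import Mathlib

section
/- Let n be a positive integer and x a natural number. Define for each v the target f(v) as follows: let r = v - n*x and a = x mod n; if r + a ≤ n then f(v) = n*x + n + (r + a), otherwise f(v) = n*x + r + a. Then as v ranges over {n*x + 1, ..., n*(x+1)}, the values f(v) range over {n*(x+1) + 1, ..., n*(x+2)} bijectively (each value attained exactly once). -/
/-!
Write `v = n x + r` with `1 ≤ r ≤ n` and `a = x mod n`. In the coordinate `r` the target map
is the cyclic rotation `r ↦ r + a` of `{1, …, n}` (reduced by `n` when it overflows), followed by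
the translation by `n (x + 1)` onto the next block. A rotation by `a` is undone by the rotation
by `n - a`, hence is a bijection of `{1, …, n}`.
-/

open Set

def blockRotate (n a r : ℕ) : ℕ :=
  if r + a ≤ n then r + a else r + a - n

theorem mapsTo_blockRotate {n a : ℕ} (h : a ≤ n) :
    MapsTo (blockRotate n a) (Icc 1 n) (Icc 1 n) := by
  rintro r ⟨_, _⟩
  unfold blockRotate
  constructor <;> split_ifs <;> omega

theorem leftInvOn_blockRotate {n a : ℕ} (h : a ≤ n) :
    LeftInvOn (blockRotate n (n - a)) (blockRotate n a) (Icc 1 n) := by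
  rintro r ⟨_, _⟩
  unfold blockRotate
  split_ifs <;> omega

theorem bijOn_blockRotate {n a : ℕ} (h : a ≤ n) :
    BijOn (blockRotate n a) (Icc 1 n) (Icc 1 n) := by
  have hinv := leftInvOn_blockRotate (Nat.sub_le n a)
  rw [Nat.sub_sub_self h] at hinv
  exact InvOn.bijOn ⟨leftInvOn_blockRotate h, hinv⟩ (mapsTo_blockRotate h)
    (mapsTo_blockRotate (Nat.sub_le n a))

theorem Nat.Icc_sub_bij (a b d : ℕ) : BijOn (· - d) (Icc (a + d) (b + d)) (Icc a b) :=
  (Icc_add_bij a b d).symm ⟨fun _ hv => Nat.sub_add_cancel (le_of_add_le_right hv.1),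
    fun v _ => Nat.add_sub_cancel v d⟩

/-- SWLE Lemma 1: the target-view map is a bijection from one block of
views onto the next block. -/
theorem swle_target_bijection (n x : ℕ) (hn : 0 < n) :
    Set.BijOn
      (fun v : ℕ =>
        if (v - n * x) + x % n ≤ n then n * x + n + ((v - n * x) + x % n)
        else n * x + (v - n * x) + x % n)
      (Set.Icc (n * x + 1) (n * (x + 1)))
      (Set.Icc (n * (x + 1) + 1) (n * (x + 2))) := by
  have hblock : Icc (n * x + 1) (n * (x + 1)) = Icc (1 + n * x) (n + n * x) := by
    congr 1 <;> ring
  have hnext : Icc (n * (x + 1) + 1) (n * (x + 2)) = Icc (1 + n * (x + 1)) (n + n * (x + 1)) := by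
    congr 1 <;> ring
  rw [hblock, hnext]
  refine ((Icc_add_bij 1 n _).comp ((bijOn_blockRotate (Nat.mod_lt x hn).le).comp
    (Nat.Icc_sub_bij 1 n _))).congr ?_
  have hshift : n * (x + 1) = n * x + n := mul_add_one n x
  rintro v ⟨_, _⟩
  simp only [Function.comp_apply, blockRotate]
  split_ifs <;> omega
end

section
/- Let n ≥ 1 and v ≥ 1 be positive integers and T_z ≥ 1. Define v_target as: v + n + T_z + (⌊v/n⌋ mod n) if v + (⌊v/n⌋ mod n) ≤ ⌈v/n⌉·n; else v + n + T_z if n ∣ v and (v/n) mod n = 1; else v + T_z + (⌊(v-1)/n⌋ mod n). Then v_target - v ≥ T_z + 1. -/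
/-!
The first two cases put the target at least `n + T_z` views ahead. In the third case the gap
is `T_z + (⌊(v-1)/n⌋ mod n)`, so the point is that this residue cannot vanish. Write
`v = w + 1` and `p = ⌊w/n⌋`, so that `⌈v/n⌉ = p + 1`. If `n ∤ v`, then `⌊v/n⌋ = p` and
failing the first case means `(w mod n) + 1 + (p mod n) > n`, forcing `p mod n ≥ 1`. If
`n ∣ v`, then `⌊v/n⌋ = p + 1`, and failing the first two cases means
`(p + 1) mod n ∉ {0, 1}`, which rules out `n ∣ p`.
-/

namespace Nat

theorem one_le_sub_one_div_mod_of_ceil_div_mul_lt {n v : ℕ} (hn : 0 < n)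
    (hceil : (v + n - 1) / n * n < v + v / n % n) (hdvd_one : ¬(n ∣ v ∧ v / n % n = 1)) :
    1 ≤ (v - 1) / n % n := by
  obtain ⟨w, rfl⟩ : ∃ w, v = w + 1 := exists_eq_add_one.mpr <| pos_of_ne_zero <| by
    rintro rfl
    simp at hceil
  rw [show w + 1 + n - 1 = w + n by omega, add_div_right w hn] at hceil
  rw [Nat.add_sub_cancel]
  by_cases hdvd : n ∣ w + 1
  · rw [succ_div_of_dvd hdvd] at hceil hdvd_one
    have hexact : (w / n + 1) * n = w + 1 := by
      rw [← succ_div_of_dvd hdvd, Nat.div_mul_cancel hdvd]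
    by_contra! hzero
    have hsucc : (w / n + 1) % n = 1 % n := by
      rw [add_mod, show w / n % n = 0 by omega, zero_add, mod_mod]
    have := mod_le 1 n
    simp only [hdvd, true_and] at hdvd_one
    omega
  · rw [succ_div_of_not_dvd hdvd] at hceil
    have hw : n * (w / n) + w % n = w := div_add_mod w n
    have hwn : w % n < n := mod_lt w hn
    have hmul : (w / n + 1) * n = n * (w / n) + n := by ring
    omega

end Nat

theorem swle_target_gap_general (n v Tz : ℕ) (hn : 1 ≤ n) :
    (if v + (v / n % n) ≤ ((v + n - 1) / n) * n then
        v + n + Tz + (v / n % n)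
     else if n ∣ v ∧ (v / n) % n = 1 then
        v + n + Tz
     else
        v + Tz + ((v - 1) / n % n)) - v ≥ Tz + 1 := by
  split_ifs with hcase1 hcase2
  · omega
  · omega
  · have := Nat.one_le_sub_one_div_mod_of_ceil_div_mul_lt hn (not_le.mp hcase1) hcase2
    omega

/-- SWLE Lemma 4: the target view computed by the three-case formula is
always at least `T_z + 1` views ahead of the current view. -/
theorem swle_target_gap (n v Tz : ℕ) (hn : 1 ≤ n) (hv : 1 ≤ v) (hTz : 1 ≤ Tz) :
    (if v + (v / n % n) ≤ ((v + n - 1) / n) * n then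
        v + n + Tz + (v / n % n)
     else if n ∣ v ∧ (v / n) % n = 1 then
        v + n + Tz
     else
        v + Tz + ((v - 1) / n % n)) - v ≥ Tz + 1 :=
  swle_target_gap_general n v Tz hn
end

section
/- Let n ≥ 1, v ≥ 1 be integers with v + (⌊v/n⌋ mod n) > ⌈v/n⌉·n, n not dividing v or (v/n) mod n ≠ 1, and v/n ≥ 1 in the sense ⌊v/n⌋ ≥ 1. Then ⌊(v-1)/n⌋ mod n ≥ 1. -/
/-!
Write `v = u + 1` and `q = ⌊u/n⌋`, so that `⌈v/n⌉ = q + 1`. If `n ∤ v` then `⌊v/n⌋ = q`, and the case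
inequality reads `v % n + q % n > n`, forcing `q % n ≥ 1`. If `n ∣ v` then `⌊v/n⌋ = q + 1`, the case
inequality says `(q + 1) % n ≥ 1`, excluding the second case gives `(q + 1) % n ≥ 2`, and so
`q % n ≥ 1` because a successor raises the residue by at most one.
-/

theorem Nat.succ_mod_le_mod_add_one (q n : ℕ) : (q + 1) % n ≤ q % n + 1 :=
  calc (q + 1) % n = (q % n + 1 % n) % n := Nat.add_mod q 1 n
    _ ≤ q % n + 1 % n := Nat.mod_le _ _
    _ ≤ q % n + 1 := Nat.add_le_add_left (Nat.mod_le 1 n) _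

theorem Nat.one_le_div_mod_of_not_dvd {n u : ℕ} (hn : 0 < n) (hdvd : ¬n ∣ u + 1)
    (hlt : (u / n + 1) * n < u + 1 + (u + 1) / n % n) : 1 ≤ u / n % n := by
  rw [Nat.succ_div_of_not_dvd hdvd] at hlt
  have hu := Nat.div_add_mod u n
  have hr := Nat.mod_lt u hn
  nlinarith

theorem Nat.one_le_div_mod_of_dvd {n u : ℕ} (hdvd : n ∣ u + 1)
    (hlt : (u / n + 1) * n < u + 1 + (u + 1) / n % n) (hne : (u + 1) / n % n ≠ 1) :
    1 ≤ u / n % n := by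
  rw [Nat.succ_div_of_dvd hdvd] at hlt hne
  have hv : (u / n + 1) * n = u + 1 := by
    rw [← Nat.succ_div_of_dvd hdvd]; exact Nat.div_mul_cancel hdvd
  have := Nat.succ_mod_le_mod_add_one (u / n) n
  omega

theorem swle_otherwise_term_pos_general (n v : ℕ)
    (hcase1 : v + (v / n % n) > ((v + n - 1) / n) * n)
    (hcase2 : ¬ (n ∣ v ∧ (v / n) % n = 1))
    (hfloor : 1 ≤ v / n) :
    1 ≤ (v - 1) / n % n := by
  obtain ⟨hn, hnv⟩ := Nat.div_pos_iff.mp hfloor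
  obtain ⟨u, rfl⟩ : ∃ u, v = u + 1 := ⟨v - 1, by omega⟩
  have hceil : (u + 1 + n - 1) / n = u / n + 1 := by
    rw [show u + 1 + n - 1 = u + n by omega, Nat.add_div_right u hn]
  rw [hceil] at hcase1
  rw [Nat.add_sub_cancel]
  by_cases hdvd : n ∣ u + 1
  · exact Nat.one_le_div_mod_of_dvd hdvd hcase1 fun h => hcase2 ⟨hdvd, h⟩
  · exact Nat.one_le_div_mod_of_not_dvd hn hdvd hcase1

/-- Key sub-step of SWLE Lemma 4: in the "otherwise" case of the
target-view formula, the additive term `⌊(v-1)/n⌋ mod n` is at least 1. -/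
theorem swle_otherwise_term_pos (n v : ℕ) (hn : 1 ≤ n) (hv : 1 ≤ v)
    (hcase1 : v + (v / n % n) > ((v + n - 1) / n) * n)
    (hcase2 : ¬ (n ∣ v ∧ (v / n) % n = 1))
    (hfloor : 1 ≤ v / n) :
    1 ≤ (v - 1) / n % n :=
  swle_otherwise_term_pos_general n v hcase1 hcase2 hfloor
end
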